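/- arXiv:2510.20013 — 2 statements merged into one kernel-verified Lean document; each statement's English description precedes it below -/
import Mathlib

section
/- Let f : {-1,1}^5 → {-1,1} be defined by f(x) = sgn(x_1 - 3x_2 + x_3 - x_4 + 3x_5). For all p ∈ [0,1], with z drawn from the erasure distribution at rate p on {-1,0,1}^5 and F the multilinear extension of f, one has E|F(z)| = (7/4)p - (11/4)p² + (7/2)p³ - (5/2)p⁴ + p⁵. -/
open Finset

noncomputable section

/-- Sign function: `1` for positive arguments, `-1` otherwise. -/
def sgn (t : ℝ) : ℝ := if 0 < t then 1 else -1

/-- Real value of a Boolean sign: `true ↦ 1`, `false ↦ -1`. -/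
def val (b : Bool) : ℝ := if b then 1 else -1

/-- Fourier coefficient `f̂(S) = 2^{-n} ∑_{x ∈ {-1,1}^n} f(x) ∏_{i∈S} x_i`. -/
def fCoeff (n : ℕ) (f : (Fin n → ℝ) → ℝ) (S : Finset (Fin n)) : ℝ :=
  (2 ^ n : ℝ)⁻¹ * ∑ b : Fin n → Bool, f (fun i => val (b i)) * ∏ i ∈ S, val (b i)

/-- Multilinear extension `F(z) = ∑_S f̂(S) ∏_{i∈S} z_i`. -/
def mlin (n : ℕ) (f : (Fin n → ℝ) → ℝ) (z : Fin n → ℝ) : ℝ :=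
  ∑ S : Finset (Fin n), fCoeff n f S * ∏ i ∈ S, z i

/-- Value of an erasure symbol: `0 ↦ 0`, `1 ↦ 1`, `2 ↦ -1`. -/
def eval3 (k : Fin 3) : ℝ := if k = 0 then 0 else if k = 1 then 1 else -1

/-- Erasure weight: `Pr[z_i = 0] = 1 - p`, `Pr[z_i = 1] = Pr[z_i = -1] = p/2`. -/
def wt (p : ℝ) (k : Fin 3) : ℝ := if k = 0 then 1 - p else p / 2

/-- `Φ_p(f) = E_z |F(z)|` under the erasure distribution at rate `p`. -/
def Phi (n : ℕ) (p : ℝ) (f : (Fin n → ℝ) → ℝ) : ℝ :=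
  ∑ e : Fin n → Fin 3, (∏ i, wt p (e i)) * |mlin n f (fun i => eval3 (e i))|

/-- `f(x) = sgn(x₁ - 3x₂ + x₃ - x₄ + 3x₅)`. -/
def f5 (x : Fin 5 → ℝ) : ℝ := sgn (x 0 - 3 * x 1 + x 2 - x 3 + 3 * x 4)

/-- `Maj₅(x) = sgn(x₁ + x₂ + x₃ + x₄ + x₅)`. -/
def maj5 (x : Fin 5 → ℝ) : ℝ := sgn (x 0 + x 1 + x 2 + x 3 + x 4)

/-
The identity `∏ i, (1 + x i * z i) = ∑ S, ∏ i ∈ S, x i * z i` turns the Fourier coefficients into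
`F(z) = 2⁻ⁿ ∑ₓ f(x) ∏ i, (1 + x i z i)`, from which the degree-5 expansion of `F` is read off.
Since the erasure measure is a product measure, `E|F(z)|` unfolds coordinate by coordinate into
`3⁵` explicit terms, each a rational constant times a monomial in `p / 2` and `1 - p`.
-/

lemma mlin_eq_sum_mul_prod (n : ℕ) (f : (Fin n → ℝ) → ℝ) (z : Fin n → ℝ) :
    mlin n f z = (2 ^ n : ℝ)⁻¹ *
      ∑ b : Fin n → Bool, f (fun i => val (b i)) * ∏ i, (1 + val (b i) * z i) := by
  have prod_one_add (b : Fin n → Bool) :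
      ∏ i, (1 + val (b i) * z i) = ∑ S : Finset (Fin n), ∏ i ∈ S, val (b i) * z i := by
    rw [Finset.prod_one_add, Finset.powerset_univ]
  simp only [mlin, fCoeff, prod_one_add, Finset.mul_sum, Finset.sum_mul, prod_mul_distrib]
  rw [Finset.sum_comm]
  refine Finset.sum_congr rfl fun b _ => Finset.sum_congr rfl fun S _ => ?_
  ring

lemma sum_fun_fin_succ {M α : Type*} [AddCommMonoid M] [Fintype α] {n : ℕ}
    (g : (Fin (n + 1) → α) → M) :
    ∑ e, g e = ∑ a : α, ∑ e : Fin n → α, g (Matrix.vecCons a e) := by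
  rw [← (Fin.consEquiv fun _ => α).sum_comp, Fintype.sum_prod_type]
  rfl

lemma sum_prod_weight_succ {R α : Type*} [CommSemiring R] [Fintype α] {n : ℕ} (w : α → R)
    (g : (Fin (n + 1) → α) → R) :
    ∑ e, (∏ i, w (e i)) * g e
      = ∑ a, w a * ∑ e : Fin n → α, (∏ i, w (e i)) * g (Matrix.vecCons a e) := by
  rw [sum_fun_fin_succ]
  simp only [Fin.prod_univ_succ, Matrix.cons_val_zero, Matrix.cons_val_succ, Finset.mul_sum,
    mul_assoc]

lemma mlin_f5 (z : Fin 5 → ℝ) : mlin 5 f5 z =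
    1/4 * z 0 - 1/2 * z 1 + 1/4 * z 2 - 1/4 * z 3 + 1/2 * z 4
      + 1/4 * (z 0 * z 2 * z 3) + 1/4 * (z 0 * z 1 * z 4) + 1/4 * (z 1 * z 2 * z 4)
      - 1/4 * (z 1 * z 3 * z 4) + 1/4 * (z 0 * z 1 * z 2 * z 3 * z 4) := by
  rw [mlin_eq_sum_mul_prod]
  simp only [f5, sgn, _root_.val, sum_fun_fin_succ, Fintype.sum_bool, Fintype.sum_unique,
    Fin.prod_univ_five, Matrix.cons_val]
  norm_num
  ring

theorem stmt8_general (p : ℝ) :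
    Phi 5 p f5
      = 7/4 * p - 11/4 * p ^ 2 + 7/2 * p ^ 3 - 5/2 * p ^ 4 + p ^ 5 := by
  simp only [Phi, mlin_f5, sum_prod_weight_succ, Fintype.sum_unique, Fin.prod_univ_zero, one_mul,
    Fin.sum_univ_three]
  simp only [eval3, wt, Matrix.cons_val, Fin.isValue, Fin.reduceEq, ↓reduceIte]
  norm_num
  ring

theorem stmt8 (p : ℝ) (hp : p ∈ Set.Icc (0 : ℝ) 1) :
    Phi 5 p f5
      = 7/4 * p - 11/4 * p ^ 2 + 7/2 * p ^ 3 - 5/2 * p ^ 4 + p ^ 5 :=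
  stmt8_general p
end
end

section
/- Let z_1, z_3, z_4 be independent {-1,0,1}-valued random variables each with Pr[z_i = 1] = Pr[z_i = -1] = p/2 and Pr[z_i = 0] = 1-p, and set M = (1/2)(z_1 + z_3 - z_4 + z_1 z_3 z_4). Then for all p ∈ [0,1], E|M| = (3/2)p - (3/2)p² + p³. -/
open Finset

noncomputable section

/-! Group the 27 outcomes by how many coordinates are nonzero. With none, `M = 0`; with exactly
one, `|M| = 1/2`; with exactly two the cubic term vanishes and `|M|` is `0` or `1` with equal
probability; with all three, `M` is a `±1`-valued Boolean function. Hence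
`E|M| = (3/2) p (1-p)^2 + (3/2) p^2 (1-p) + p^3`. -/

lemma Fintype.sum_fin_succ_pi {α M : Type*} [Fintype α] [AddCommMonoid M] {n : ℕ}
    (g : (Fin (n + 1) → α) → M) :
    ∑ f : Fin (n + 1) → α, g f = ∑ a : α, ∑ f : Fin n → α, g (Fin.cons a f) := by
  rw [← (Fin.consEquiv fun _ => α).sum_comp, Fintype.sum_prod_type]
  rfl

lemma Fintype.sum_fin_three_pi {α M : Type*} [Fintype α] [AddCommMonoid M]
    (g : (Fin 3 → α) → M) :
    ∑ f : Fin 3 → α, g f = ∑ a : α, ∑ b : α, ∑ c : α, g ![a, b, c] := by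
  simp only [Fintype.sum_fin_succ_pi, Fintype.sum_unique]
  rfl

@[simp] lemma eval3_zero : eval3 0 = 0 := rfl
@[simp] lemma eval3_one : eval3 1 = 1 := rfl
@[simp] lemma eval3_two : eval3 2 = -1 := rfl

@[simp] lemma wt_zero (p : ℝ) : wt p 0 = 1 - p := rfl
@[simp] lemma wt_one (p : ℝ) : wt p 1 = p / 2 := rfl
@[simp] lemma wt_two (p : ℝ) : wt p 2 = p / 2 := rfl

theorem stmt13_general (p : ℝ) :
    ∑ e : Fin 3 → Fin 3, (∏ i, wt p (e i)) *
        |(1/2 : ℝ) * (eval3 (e 0) + eval3 (e 1) - eval3 (e 2)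
            + eval3 (e 0) * eval3 (e 1) * eval3 (e 2))|
      = 3/2 * p - 3/2 * p ^ 2 + p ^ 3 := by
  simp only [Fintype.sum_fin_three_pi, Fin.sum_univ_three, Fin.prod_univ_three,
    Matrix.cons_val_zero, Matrix.cons_val_one, Matrix.cons_val_two]
  norm_num
  ring

theorem stmt13 (p : ℝ) (hp : p ∈ Set.Icc (0 : ℝ) 1) :
    ∑ e : Fin 3 → Fin 3, (∏ i, wt p (e i)) *
        |(1/2 : ℝ) * (eval3 (e 0) + eval3 (e 1) - eval3 (e 2)
            + eval3 (e 0) * eval3 (e 1) * eval3 (e 2))|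
      = 3/2 * p - 3/2 * p ^ 2 + p ^ 3 :=
  stmt13_general p
end
end
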